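/- Let f ∈ K⟨⟨e0,e1⟩⟩ satisfy f[w ⧢ e0] = 0 and f[w ⧢ e1] = 0 for every word w (this holds for instance for every f ∈ Π̃(K), and for every f that is primitive, i.e. f[w ⧢ w'] = 0 for all nonempty words w, w'). Then for all integers n ≥ d ≥ 1, the ℤ-submodule of K generated by the coefficients f[w] over all words w of weight n and depth d is generated by the coefficients f[e0^{s_d−1} e1 e0^{s_{d−1}−1} e1 ⋯ e0^{s_1−1} e1] over all tuples s_d,…,s_1 ≥ 1 with s_d ≥ 2 and s_d+⋯+s_1 = n. -/

import Mathlib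

/-! Infrastructure: noncommutative formal power series in two letters `e0, e1`,
their ring structure, exponential, inverse, substitution, shuffle products,
and the various words and submodules of coefficients used in the statements. -/

/-- Words over the alphabet `{e0, e1}`: lists over `Fin 2` (`0` is `e0`, `1` is `e1`),
read from left to right. -/
abbrev Word : Type := List (Fin 2)

/-- The depth of a word: its number of letters `e1`. -/
def depth (w : Word) : ℕ := w.count 1

/-- Noncommutative formal power series in `e0, e1` over `K`, encoded by their
coefficient functions on words. -/
def NCS (K : Type*) : Type _ := Word → K

namespace NCS

variable {K : Type*} [CommRing K]

instance : AddCommGroup (NCS K) := Pi.addCommGroup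
instance : SMul K (NCS K) := ⟨fun c f => fun w => c * f w⟩
instance : One (NCS K) := ⟨fun w => if w = [] then 1 else 0⟩
/-- Multiplication of noncommutative power series (Cauchy product on words). -/
instance : Mul (NCS K) := ⟨fun f g => fun w =>
  ∑ i ∈ Finset.range (w.length + 1), f (w.take i) * g (w.drop i)⟩

lemma mul_apply (f g : NCS K) (w : Word) :
    (f * g) w = ∑ i ∈ Finset.range (w.length + 1), f (w.take i) * g (w.drop i) := rfl

lemma add_apply (f g : NCS K) (w : Word) : (f + g) w = f w + g w := rfl

lemma smul_apply (c : K) (f : NCS K) (w : Word) : (c • f) w = c * f w := rfl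

lemma zero_apply (w : Word) : (0 : NCS K) w = 0 := rfl

lemma one_apply (w : Word) : (1 : NCS K) w = if w = [] then 1 else 0 := rfl

/-- Left shift of the coefficient function by a letter. -/
def shift (a : Fin 2) (f : NCS K) : NCS K := fun w => f (a :: w)

lemma mul_nil (f g : NCS K) : (f * g) [] = f [] * g [] := by
  simp [mul_apply]

lemma cons_mul (f g : NCS K) (a : Fin 2) (w : Word) :
    (f * g) (a :: w) = f [] * g (a :: w) + (shift a f * g) w := by
  show (∑ i ∈ Finset.range (w.length + 1 + 1), f ((a :: w).take i) * g ((a :: w).drop i)) = _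
  rw [Finset.sum_range_succ']
  simp only [List.take_succ_cons, List.drop_succ_cons, List.take_zero, List.drop_zero]
  rw [add_comm]
  rfl

private lemma zero_mul' (f : NCS K) : 0 * f = 0 := by
  funext w; simp [mul_apply, zero_apply]

private lemma mul_zero' (f : NCS K) : f * 0 = 0 := by
  funext w; simp [mul_apply, zero_apply]

private lemma add_mul' (f g h : NCS K) : (f + g) * h = f * h + g * h := by
  funext w
  simp [mul_apply, add_apply, add_mul, Finset.sum_add_distrib]

private lemma mul_add' (f g h : NCS K) : f * (g + h) = f * g + f * h := by
  funext w
  simp [mul_apply, add_apply, mul_add, Finset.sum_add_distrib]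

private lemma smul_mul' (c : K) (f g : NCS K) : (c • f) * g = c • (f * g) := by
  funext w
  simp [mul_apply, smul_apply, Finset.mul_sum, mul_assoc]

private lemma one_mul' (f : NCS K) : 1 * f = f := by
  funext w
  cases w with
  | nil => simp [mul_nil, one_apply]
  | cons a w =>
      have : shift a (1 : NCS K) = 0 := by
        funext v; show (if (a :: v : Word) = [] then (1:K) else 0) = 0; simp
      rw [cons_mul, this, zero_mul', zero_apply, one_apply]
      simp

private lemma mul_one' (f : NCS K) : f * 1 = f := by
  funext w
  induction w generalizing f with
  | nil => simp [mul_nil, one_apply]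
  | cons a w ih =>
      rw [cons_mul, one_apply, ih]
      simp [shift]

private lemma mul_assoc' (f g h : NCS K) : f * g * h = f * (g * h) := by
  funext w
  induction w generalizing f g h with
  | nil =>
      simp only [mul_nil]
      ring
  | cons a w ih =>
      have h1 : shift a (f * g) = f [] • shift a g + shift a f * g := by
        funext v
        show (f * g) (a :: v) = _
        rw [cons_mul]
        rfl
      have e1 : (f * g * h) (a :: w)
          = f [] * g [] * h (a :: w)
            + (f [] * ((shift a g * h) w) + ((shift a f * g) * h) w) := by
        rw [cons_mul, h1, add_mul', smul_mul', mul_nil, add_apply, smul_apply]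
      have e2 : (f * (g * h)) (a :: w)
          = f [] * (g [] * h (a :: w) + (shift a g * h) w)
            + (shift a f * (g * h)) w := by
        rw [cons_mul, cons_mul]
      rw [e1, e2, ih]
      ring

instance instRing : Ring (NCS K) where
  __ := (inferInstance : AddCommGroup (NCS K))
  __ := (inferInstance : Mul (NCS K))
  __ := (inferInstance : One (NCS K))
  left_distrib := mul_add'
  right_distrib := add_mul'
  zero_mul := zero_mul'
  mul_zero := mul_zero'
  mul_assoc := mul_assoc'
  one_mul := one_mul'
  mul_one := mul_one'

/-- The inverse of a noncommutative power series, given by the geometric series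
`Σ_k (1-f)^k`.  For `f` with constant coefficient `1` (the only case used) this is
the genuine two-sided multiplicative inverse of `f`. -/
instance : Inv (NCS K) :=
  ⟨fun f => fun w => ∑ k ∈ Finset.range (w.length + 1), ((1 - f) ^ k) w⟩

/-- The series `e0`. -/
def E0 : NCS K := fun w => if w = [0] then 1 else 0

/-- The series `e1`. -/
def E1 : NCS K := fun w => if w = [1] then 1 else 0

/-- The series `e∞ = -e0 - e1`. -/
def Einf : NCS K := -E0 - E1

/-- The finite set of all words of length at most `n`. -/
def wordsLe (n : ℕ) : Finset Word :=
  (Finset.range (n + 1)).biUnion fun k =>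
    Finset.image (fun t : Fin k → Fin 2 => List.ofFn t) Finset.univ

/-- The product of the letters of `w` after the substitution `e0 ↦ a`, `e1 ↦ b`. -/
def prodWord (a b : NCS K) (w : Word) : NCS K :=
  (w.map fun c => if c = 0 then a else b).prod

/-- Substitution `f(e0,e1) ↦ f(a,b)`: the image of `f` under the continuous algebra
endomorphism determined by `e0 ↦ a`, `e1 ↦ b` (for `a`, `b` with zero constant term). -/
def subst (a b : NCS K) (f : NCS K) : NCS K :=
  fun v => ∑ w ∈ wordsLe v.length, f w * prodWord a b w v

/-- The exponential series `exp a = Σ_k a^k/k!` (for `a` with zero constant term). -/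
def expS {K : Type*} [Field K] (a : NCS K) : NCS K :=
  fun w => ∑ k ∈ Finset.range (w.length + 1), (Nat.factorial k : K)⁻¹ * (a ^ k) w

end NCS

/-- The list of all shuffles of two words. -/
def shuffle : Word → Word → List Word
  | [], v => [v]
  | a :: u, [] => [a :: u]
  | a :: u, b :: v =>
      ((shuffle u (b :: v)).map fun w => a :: w) ++ ((shuffle (a :: u) v).map fun w => b :: w)
termination_by u v => u.length + v.length

namespace NCS

variable {K : Type*} [CommRing K]

/-- `f[u ⧢ v]`: the coefficient function `f` applied linearly to the shuffle `u ⧢ v`. -/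
def shufApply (f : NCS K) (u v : Word) : K := ((shuffle u v).map fun w => f w).sum

/-- `f ∈ Π(K)`: group-like elements, i.e. solutions of the shuffle equations with
constant coefficient `1`. -/
def IsPi (f : NCS K) : Prop :=
  f [] = 1 ∧ ∀ u v : Word, shufApply f u v = f u * f v

/-- `f ∈ Π̃(K)`: elements of `Π(K)` whose weight-one coefficients vanish. -/
def IsPiT (f : NCS K) : Prop := IsPi f ∧ f [0] = 0 ∧ f [1] = 0

end NCS

/-- The block `e0^{k-1} e1`. -/
def blk (k : ℕ) : Word := List.replicate (k - 1) 0 ++ [1]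

/-- The word `e0^{s_d-1} e1 e0^{s_{d-1}-1} e1 ⋯ e0^{s_1-1} e1` (only the values
`s 1, …, s d` matter). -/
def wordW (d : ℕ) (s : ℕ → ℕ) : Word :=
  (List.ofFn fun j : Fin d => blk (s (d - (j : ℕ)))).flatten

/-- The word `e0^{s_d-1} e1 ⋯ e0^{s_1-1} e1 e0^{s_0-1}`. -/
def word1 (d : ℕ) (s : ℕ → ℕ) : Word :=
  wordW d s ++ List.replicate (s 0 - 1) 0

/-- The word `W(a_d; a_{d-1}, …, a_1; a_0) = e0^{a_d} e1 e0^{a_{d-1}} e1 ⋯ e1 e0^{a_1} e1 e0^{a_0}`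
of depth `d`. -/
def wordA (d : ℕ) (a : ℕ → ℕ) : Word :=
  List.replicate (a d) 0 ++
    (List.ofFn fun j : Fin d => (1 : Fin 2) :: List.replicate (a (d - 1 - (j : ℕ))) 0).flatten

/-- `binom (−s, l) = (−1)^l · binom (s+l−1, l)`. -/
def nbinom (s l : ℕ) : ℤ := (-1) ^ l * ((s + l - 1).choose l)

/-- Extension of a tuple `t : Fin d → ℕ` to `ℕ → ℕ` so that index `i ∈ {1, …, d}`
reads `t (i-1)` and all other indices read `0`. -/
def extFin (d : ℕ) (t : Fin d → ℕ) : ℕ → ℕ :=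
  fun i => if h : i - 1 < d ∧ 1 ≤ i then t ⟨i - 1, h.1⟩ else 0

namespace NCS

/-- The filtration `Fil_s(C_μ) = Σ_{s1+s2=s} (1/s1!)·ℤ·(μ/2)^{s2}` of `ℚ ⊆ K`
(`μ ≠ 0` case; for `μ = 0` it reduces to `ℤ ⊆ K`). -/
def Fil {K : Type*} [Field K] (μ : K) (s : ℕ) : Submodule ℤ K :=
  Submodule.span ℤ
    {x : K | ∃ s1 s2 : ℕ, s1 + s2 = s ∧ x = (Nat.factorial s1 : K)⁻¹ * (μ / 2) ^ s2}

variable {K : Type*} [CommRing K]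

/-- `M_D(f)`: the ℤ-submodule of `K` generated by the products `f[w_1]⋯f[w_k]`, `k ≥ 1`,
where each `w_j` is a word of depth between `1` and `D`. -/
def Msub (D : ℕ) (f : NCS K) : Submodule ℤ K :=
  Submodule.span ℤ
    {x : K | ∃ l : List Word, l ≠ [] ∧ (∀ w ∈ l, 1 ≤ depth w ∧ depth w ≤ D) ∧
      x = (l.map fun w => f w).prod}

/-- `M^μ_D(f)`: as `Msub` but with coefficients in the filtration `Fil`. -/
def MsubFil {K : Type*} [Field K] (μ : K) (D : ℕ) (f : NCS K) : Submodule ℤ K :=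
  Submodule.span ℤ
    {x : K | ∃ (l : List Word) (c : K), l ≠ [] ∧
      (∀ w ∈ l, 1 ≤ depth w ∧ depth w ≤ D) ∧
      c ∈ Fil μ ((l.map List.length).sum) ∧
      x = c * (l.map fun w => f w).prod}

/-- The one-dimensional associator equations with `μ = 0`: duality (2-cycle), 3-cycle,
and the special automorphism equation. -/
def OneDim0 (Φ : NCS K) : Prop :=
  Φ * subst E1 E0 Φ = 1 ∧
  subst Einf E0 Φ * subst E1 Einf Φ * Φ = 1 ∧
  E0 + Φ⁻¹ * E1 * Φ + (subst E0 Einf Φ)⁻¹ * Einf * subst E0 Einf Φ = 0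

/-- The one-dimensional associator equations with coupling constant `μ ≠ 0`: duality,
hexagon, and the equation of special automorphisms. -/
def OneDimMu {K : Type*} [Field K] (μ : K) (Φ : NCS K) : Prop :=
  subst E1 E0 Φ = Φ⁻¹ ∧
  expS ((μ / 2) • E0) * subst Einf E0 Φ * expS ((μ / 2) • Einf) *
      subst E1 Einf Φ * expS ((μ / 2) • E1) * Φ = 1 ∧
  Φ⁻¹ * expS ((-μ) • E1) * Φ * expS ((-μ) • E0) =
    expS ((μ / 2) • E0) * (subst E0 Einf Φ)⁻¹ * expS (μ • Einf) *
      subst E0 Einf Φ * expS ((-(μ / 2)) • E0)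

end NCS

/-!
The shuffle product is associative, so `f[u ⧢ c] = 0` for all `u` gives
`(k+1) f[u ⧢ c^{k+1}] = f[(u ⧢ c^k) ⧢ c] = 0`, hence `f[u ⧢ c^k] = 0` for `k ≥ 1` in
characteristic zero. In `(p e1) ⧢ e0^k` the word `p e1 e0^k` occurs once and every other word ends
in fewer letters `e0`; in `(e0 q) ⧢ e1^j` the word `e1^j e0 q` occurs once and every other word
begins with fewer letters `e1`. Induction on these two numbers writes every coefficient of weight
`n` and depth `d` as a ℤ-combination of coefficients, of the same weight and depth, on words that
begin with `e0` and end with `e1`, which are exactly the words `e0^{s_d-1} e1 ⋯ e0^{s_1-1} e1` with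
`s_d ≥ 2`. The remaining words `e1^n` have coefficient `f[∅ ⧢ e1^n] = 0`.
-/

section Shuffle

variable (a b : Fin 2) (u v : Word)

@[simp] lemma shuffle_nil_left : shuffle [] v = [v] := by simp [shuffle]

@[simp] lemma shuffle_nil_right : shuffle u [] = [u] := by cases u <;> simp [shuffle]

lemma shuffle_cons_cons :
    shuffle (a :: u) (b :: v) =
      (shuffle u (b :: v)).map (a :: ·) ++ (shuffle (a :: u) v).map (b :: ·) := by
  rw [shuffle]

lemma coe_shuffle_cons_cons :
    (shuffle (a :: u) (b :: v) : Multiset Word) =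
      (shuffle u (b :: v) : Multiset Word).map (a :: ·) +
        (shuffle (a :: u) v : Multiset Word).map (b :: ·) := by
  rw [shuffle_cons_cons, ← Multiset.coe_add, Multiset.map_coe, Multiset.map_coe]

lemma shuffle_replicate_singleton (c : Fin 2) (k : ℕ) :
    shuffle (List.replicate k c) [c] = List.replicate (k + 1) (List.replicate (k + 1) c) := by
  induction k with
  | zero => simp
  | succ k ih =>
    rw [List.replicate_succ, shuffle_cons_cons, shuffle_nil_right, ih]
    simp only [List.map_replicate, List.map_cons, List.map_nil, ← List.replicate_succ,
      ← List.replicate_succ']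

lemma perm_of_mem_shuffle : ∀ {u v x : Word}, x ∈ shuffle u v → x.Perm (u ++ v)
  | [], v, x, h => by simp_all
  | a :: u, [], x, h => by simp_all
  | a :: u, b :: v, x, h => by
    rw [shuffle_cons_cons, List.mem_append, List.mem_map, List.mem_map] at h
    rcases h with ⟨y, hy, rfl⟩ | ⟨y, hy, rfl⟩
    · exact (perm_of_mem_shuffle hy).cons a
    · exact ((perm_of_mem_shuffle hy).cons b).trans List.perm_middle.symm
termination_by u v => u.length + v.length

lemma head?_of_mem_shuffle : ∀ {u v x : Word}, x ∈ shuffle u v →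
    x.head? = u.head? ∨ x.head? = v.head?
  | [], v, x, h => by simp_all
  | a :: u, [], x, h => by simp_all
  | a :: u, b :: v, x, h => by
    rw [shuffle_cons_cons, List.mem_append, List.mem_map, List.mem_map] at h
    rcases h with ⟨y, -, rfl⟩ | ⟨y, -, rfl⟩ <;> simp

theorem shuffle_assoc : ∀ u v w : Word,
    (shuffle u v : Multiset Word).bind (fun x => (shuffle x w : Multiset Word)) =
      (shuffle v w : Multiset Word).bind (fun y => (shuffle u y : Multiset Word))
  | [], v, w => by simpa using (Multiset.bind_singleton _ id).symm
  | a :: u, [], w => by simp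
  | a :: u, b :: v, [] => by simpa using Multiset.bind_singleton _ id
  | a :: u, b :: v, c :: w => by
    have h₁ := shuffle_assoc u (b :: v) (c :: w)
    have h₂ := shuffle_assoc (a :: u) v (c :: w)
    have h₃ := shuffle_assoc (a :: u) (b :: v) w
    simp only [coe_shuffle_cons_cons, Multiset.add_bind, Multiset.bind_map, Multiset.bind_add,
      ← Multiset.map_bind] at h₁ h₃ ⊢
    rw [h₁, h₂, ← h₃]
    simp only [Multiset.map_add]
    abel
termination_by u v w => u.length + v.length + w.length

end Shuffle

section Decompositions

variable (a b : Fin 2)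

lemma exists_shuffle_append_replicate_eq_cons :
    ∀ (p : Word) (k : ℕ), ∃ l : Multiset Word,
      (shuffle (p ++ [b]) (List.replicate k a) : Multiset Word) =
          (p ++ [b] ++ List.replicate k a) ::ₘ l ∧
        ∀ v ∈ l, ∃ q k', k' < k ∧ v = q ++ [b] ++ List.replicate k' a
  | p, 0 => ⟨0, by simp, by simp⟩
  | p, k + 1 => by
    obtain ⟨l₂, h₂, hl₂⟩ := exists_shuffle_append_replicate_eq_cons p k
    have hcons : ∀ y ∈ (shuffle (p ++ [b]) (List.replicate k a) : Multiset Word),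
        ∃ q k', k' < k + 1 ∧ a :: y = q ++ [b] ++ List.replicate k' a := by
      simp only [h₂, Multiset.mem_cons]
      rintro y (rfl | hy)
      · exact ⟨a :: p, k, k.lt_succ_self, rfl⟩
      · obtain ⟨q, k', hk', rfl⟩ := hl₂ y hy
        exact ⟨a :: q, k', by omega, rfl⟩
    cases p with
    | nil =>
      refine ⟨(shuffle [b] (List.replicate k a) : Multiset Word).map (a :: ·), ?_, ?_⟩
      · simp [List.replicate_succ, coe_shuffle_cons_cons]
      · simpa using hcons
    | cons x p =>
      obtain ⟨l₁, h₁, hl₁⟩ := exists_shuffle_append_replicate_eq_cons p (k + 1)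
      refine ⟨l₁.map (x :: ·) +
        (shuffle (x :: p ++ [b]) (List.replicate k a) : Multiset Word).map (a :: ·), ?_, ?_⟩
      · rw [List.cons_append, List.replicate_succ, coe_shuffle_cons_cons, ← List.replicate_succ, h₁]
        simp
      · simp only [Multiset.mem_add, Multiset.mem_map]
        rintro _ (⟨y, hy, rfl⟩ | ⟨y, hy, rfl⟩)
        · obtain ⟨q, k', hk', rfl⟩ := hl₁ y hy
          exact ⟨x :: q, k', hk', rfl⟩
        · exact hcons y hy

lemma exists_shuffle_cons_replicate_eq_cons :
    ∀ (q : Word) (j : ℕ), ∃ l : Multiset Word,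
      (shuffle (a :: q) (List.replicate j b) : Multiset Word) =
          (List.replicate j b ++ a :: q) ::ₘ l ∧
        ∀ v ∈ l, ∃ j' q', j' < j ∧ v = List.replicate j' b ++ a :: q'
  | q, 0 => ⟨0, by simp, by simp⟩
  | q, j + 1 => by
    obtain ⟨l, h, hl⟩ := exists_shuffle_cons_replicate_eq_cons q j
    refine ⟨l.map (b :: ·) + (shuffle q (List.replicate (j + 1) b) : Multiset Word).map (a :: ·),
      ?_, ?_⟩
    · rw [List.replicate_succ, coe_shuffle_cons_cons, ← List.replicate_succ, h]
      simp [List.replicate_succ, add_comm]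
    · simp only [Multiset.mem_add, Multiset.mem_map]
      rintro _ (⟨y, hy, rfl⟩ | ⟨y, -, rfl⟩)
      · obtain ⟨j', q', hj', rfl⟩ := hl y hy
        exact ⟨j' + 1, q', by omega, rfl⟩
      · exact ⟨0, y, j.succ_pos, rfl⟩

end Decompositions

@[simp] lemma depth_nil : depth [] = 0 := rfl

@[simp] lemma depth_cons_zero (w : Word) : depth (0 :: w) = depth w := by simp [depth]

@[simp] lemma depth_cons_one (w : Word) : depth (1 :: w) = depth w + 1 := by simp [depth]

@[simp] lemma depth_append (u v : Word) : depth (u ++ v) = depth u + depth v := List.count_append ..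

@[simp] lemma depth_replicate_zero (k : ℕ) : depth (List.replicate k 0) = 0 := by
  simp [depth, List.count_replicate]

lemma List.Perm.depth_eq {u v : Word} (h : u.Perm v) : depth u = depth v := h.count_eq 1

lemma blk_length {k : ℕ} (hk : k ≠ 0) : (blk k).length = k := by
  simp [blk]; omega

lemma wordW_succ (d : ℕ) (s : ℕ → ℕ) : wordW (d + 1) s = blk (s (d + 1)) ++ wordW d s := by
  simp only [wordW, List.ofFn_succ, List.flatten_cons, Fin.val_zero, Nat.sub_zero, Fin.val_succ,
    Nat.add_sub_add_right]

lemma wordW_congr {d : ℕ} {s s' : ℕ → ℕ} (h : ∀ i, 1 ≤ i → i ≤ d → s i = s' i) :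
    wordW d s = wordW d s' := by
  simp only [wordW]
  congr 2
  ext1 j
  rw [h _ (by omega) (by omega)]

lemma wordW_length {d : ℕ} {s : ℕ → ℕ} (h : ∀ i, 1 ≤ i → i ≤ d → 1 ≤ s i) :
    (wordW d s).length = ∑ i ∈ Finset.Icc 1 d, s i := by
  induction d with
  | zero => simp [wordW]
  | succ d ih =>
    rw [wordW_succ, List.length_append, ih (fun i h1 h2 => h i h1 (by omega)),
      blk_length (by have := h (d + 1) (by omega) le_rfl; omega),
      Finset.sum_Icc_succ_top (by omega), add_comm]

lemma depth_wordW (d : ℕ) (s : ℕ → ℕ) : depth (wordW d s) = d := by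
  induction d with
  | zero => simp [wordW]
  | succ d ih => simp [wordW_succ, blk, ih]

lemma exists_replicate_append_one_eq_wordW :
    ∀ (u : Word) (m : ℕ), ∃ s : ℕ → ℕ, (∀ i, 1 ≤ i → i ≤ depth u + 1 → 1 ≤ s i) ∧
      m + 1 ≤ s (depth u + 1) ∧ List.replicate m 0 ++ u ++ [1] = wordW (depth u + 1) s
  | [], m => ⟨fun _ => m + 1, by simp, le_rfl, by simp [wordW, blk]⟩
  | 0 :: u, m => by
    obtain ⟨s, hs, hm, hu⟩ := exists_replicate_append_one_eq_wordW u (m + 1)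
    refine ⟨s, by simpa using hs, by simp at hm ⊢; omega, ?_⟩
    simpa [List.replicate_succ'] using hu
  | 1 :: u, m => by
    obtain ⟨s, hs, -, hu⟩ := exists_replicate_append_one_eq_wordW u 0
    refine ⟨Function.update s (depth u + 2) (m + 1), fun i hi₁ hi₂ => ?_, ?_, ?_⟩
    · rcases eq_or_ne i (depth u + 2) with rfl | hi
      · simp
      · rw [Function.update_of_ne hi]
        exact hs i hi₁ (by simp at hi₂; omega)
    · simp
    · have hd : depth (1 :: u) + 1 = depth u + 1 + 1 := by simp
      rw [hd, wordW_succ, Function.update_self,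
        wordW_congr (fun i _ hi => Function.update_of_ne (by omega) _ _), ← hu]
      simp [blk]

lemma exists_eq_append_one_append_replicate_zero {w : Word} (hw : 1 ∈ w) :
    ∃ p k, w = p ++ [1] ++ List.replicate k 0 := by
  induction w using List.reverseRecOn with
  | nil => simp at hw
  | append_singleton w c ih =>
    match c, hw with
    | 0, hw =>
      obtain ⟨p, k, rfl⟩ := ih (by simpa using hw)
      exact ⟨p, k + 1, by simp [List.replicate_succ']⟩
    | 1, _ => exact ⟨w, 0, by simp⟩

lemma exists_eq_replicate_one_append_cons_zero {w : Word} (hw : 0 ∈ w) :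
    ∃ j q, w = List.replicate j 1 ++ 0 :: q := by
  induction w with
  | nil => simp at hw
  | cons c w ih =>
    match c, hw with
    | 0, _ => exact ⟨0, w, rfl⟩
    | 1, hw =>
      obtain ⟨j, q, rfl⟩ := ih (by simpa using hw)
      exact ⟨j + 1, q, rfl⟩

namespace NCS

variable {K : Type*} [CommRing K]

lemma shufApply_eq_sum (f : NCS K) (u v : Word) :
    shufApply f u v = ((shuffle u v : Multiset Word).map fun w => f w).sum := rfl

lemma sum_shufApply_shuffle_assoc (f : NCS K) (u v w : Word) :
    ((shuffle u v).map fun x => shufApply f x w).sum =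
      ((shuffle v w).map fun y => shufApply f u y).sum := by
  have := congrArg (fun s : Multiset Word => (s.map fun w => f w).sum) (shuffle_assoc u v w)
  simp only [Multiset.map_bind, Multiset.sum_bind, Multiset.map_coe, Multiset.sum_coe] at this
  exact this

lemma shufApply_replicate_eq_zero [IsAddTorsionFree K] {f : NCS K} {c : Fin 2}
    (hc : ∀ u, shufApply f u [c] = 0) (u : Word) {k : ℕ} (hk : k ≠ 0) :
    shufApply f u (List.replicate k c) = 0 := by
  obtain ⟨k, rfl⟩ := Nat.exists_eq_succ_of_ne_zero hk
  have h := sum_shufApply_shuffle_assoc f u (List.replicate k c) [c]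
  simp only [hc, List.map_const', List.sum_replicate, smul_zero, shuffle_replicate_singleton,
    List.map_replicate] at h
  exact (smul_eq_zero.mp h.symm).resolve_left k.succ_ne_zero

def admissibleSpan (f : NCS K) (n d : ℕ) : Submodule ℤ K :=
  Submodule.span ℤ {x : K | ∃ s : ℕ → ℕ,
    (∀ i, 1 ≤ i → i ≤ d → 1 ≤ s i) ∧ 2 ≤ s d ∧ (∑ i ∈ Finset.Icc 1 d, s i) = n ∧ x = f (wordW d s)}

lemma shufApply_nil_left (f : NCS K) (v : Word) : shufApply f [] v = f v := by
  simp [shufApply]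

lemma apply_mem_of_shuffle_eq_cons {N : Submodule ℤ K} {f : NCS K} {u v w : Word}
    {l : Multiset Word}
    (h : (shuffle u v : Multiset Word) = w ::ₘ l) (h₀ : shufApply f u v = 0)
    (hl : ∀ x ∈ l, x ∈ shuffle u v → x.Perm w → f x ∈ N) : f w ∈ N := by
  have hmem : ∀ x ∈ l, x ∈ shuffle u v := fun x hx => by
    rw [← Multiset.mem_coe, h]; exact Multiset.mem_cons_of_mem hx
  have hw : w ∈ shuffle u v := by rw [← Multiset.mem_coe, h]; exact Multiset.mem_cons_self _ _
  rw [shufApply_eq_sum, h, Multiset.map_cons, Multiset.sum_cons] at h₀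
  rw [eq_neg_of_add_eq_zero_left h₀]
  refine N.neg_mem (multiset_sum_mem _ fun y hy => ?_)
  obtain ⟨x, hx, rfl⟩ := Multiset.mem_map.mp hy
  exact hl x hx (hmem x hx) ((perm_of_mem_shuffle (hmem x hx)).trans (perm_of_mem_shuffle hw).symm)

lemma coeff_cons_zero_append_one_mem (f : NCS K) (u : Word) :
    f (0 :: u ++ [1]) ∈ admissibleSpan f (0 :: u ++ [1]).length (depth (0 :: u ++ [1])) := by
  obtain ⟨s, hs, hs₂, hu⟩ := exists_replicate_append_one_eq_wordW u 1
  have hw : 0 :: u ++ [1] = wordW (depth u + 1) s := by simpa using hu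
  rw [hw, wordW_length hs, depth_wordW]
  exact Submodule.subset_span ⟨s, hs, hs₂, rfl, rfl⟩

variable [IsAddTorsionFree K] {f : NCS K}

lemma coeff_append_one_append_replicate_zero_mem (hf₀ : ∀ w : Word, shufApply f w [0] = 0)
    (k : ℕ) (p : Word) (hp : (p ++ [1] ++ List.replicate k 0).head? = some 0) :
    f (p ++ [1] ++ List.replicate k 0) ∈ admissibleSpan f
      (p ++ [1] ++ List.replicate k 0).length (depth (p ++ [1] ++ List.replicate k 0)) := by
  induction k using Nat.strong_induction_on generalizing p with
  | _ k ih =>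
    rcases Nat.eq_zero_or_pos k with rfl | hk
    · obtain ⟨u, rfl⟩ : ∃ u, p = 0 :: u := by
        cases p with
        | nil => simp at hp
        | cons c u => simp at hp; exact ⟨u, by rw [hp]⟩
      simpa using coeff_cons_zero_append_one_mem f u
    obtain ⟨l, hl, hl'⟩ := exists_shuffle_append_replicate_eq_cons 0 1 p k
    refine apply_mem_of_shuffle_eq_cons hl (shufApply_replicate_eq_zero hf₀ _ hk.ne')
      fun x hx hxs hperm => ?_
    obtain ⟨q, k', hk', rfl⟩ := hl' x hx
    rw [← hperm.length_eq, ← hperm.depth_eq]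
    refine ih k' hk' q ?_
    rcases head?_of_mem_shuffle hxs with h | h <;> rw [h]
    · simpa using hp
    · simp [List.head?_replicate, hk.ne']

lemma coeff_replicate_one_append_cons_zero_mem (hf₀ : ∀ w : Word, shufApply f w [0] = 0)
    (hf₁ : ∀ w : Word, shufApply f w [1] = 0) (j : ℕ) (q : Word)
    (hq : 1 ∈ List.replicate j 1 ++ 0 :: q) :
    f (List.replicate j 1 ++ 0 :: q) ∈ admissibleSpan f
      (List.replicate j 1 ++ 0 :: q).length (depth (List.replicate j 1 ++ 0 :: q)) := by
  induction j using Nat.strong_induction_on generalizing q with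
  | _ j ih =>
    rcases Nat.eq_zero_or_pos j with rfl | hj
    · obtain ⟨p, k, hpk⟩ := exists_eq_append_one_append_replicate_zero hq
      rw [hpk] at hq ⊢
      exact coeff_append_one_append_replicate_zero_mem hf₀ k p (by simp [← hpk])
    obtain ⟨l, hl, hl'⟩ := exists_shuffle_cons_replicate_eq_cons 0 1 q j
    refine apply_mem_of_shuffle_eq_cons hl (shufApply_replicate_eq_zero hf₁ _ hj.ne')
      fun x hx _ hperm => ?_
    obtain ⟨j', q', hj', rfl⟩ := hl' x hx
    rw [← hperm.length_eq, ← hperm.depth_eq]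
    exact ih j' hj' q' (hperm.mem_iff.mpr hq)

theorem coeff_mem_admissibleSpan (hf₀ : ∀ w : Word, shufApply f w [0] = 0)
    (hf₁ : ∀ w : Word, shufApply f w [1] = 0) {w : Word} (hw : 1 ∈ w) :
    f w ∈ admissibleSpan f w.length (depth w) := by
  by_cases h₀ : 0 ∈ w
  · obtain ⟨j, q, rfl⟩ := exists_eq_replicate_one_append_cons_zero h₀
    exact coeff_replicate_one_append_cons_zero_mem hf₀ hf₁ j q hw
  · have hw₁ : w = List.replicate w.length 1 := List.eq_replicate_iff.mpr ⟨rfl, fun c hc => by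
      match c, hc with
      | 0, hc => exact absurd hc h₀
      | 1, _ => rfl⟩
    have hf : f w = 0 := by
      rw [hw₁, ← shufApply_nil_left f]
      exact shufApply_replicate_eq_zero hf₁ _ (List.length_pos_of_mem hw).ne'
    exact hf ▸ zero_mem _

end NCS

open NCS in
/-- the module of coefficients of fixed weight `n` and depth `d` is
generated by the coefficients on "convergent" words `e0^{s_d-1}e1⋯e0^{s_1-1}e1`,
`s_d ≥ 2`. -/
theorem stmt_2 {K : Type*} [Field K] [CharZero K] (f : NCS K)
    (hf0 : ∀ w : Word, shufApply f w [0] = 0)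
    (hf1 : ∀ w : Word, shufApply f w [1] = 0) :
    ∀ n d : ℕ, 1 ≤ d → d ≤ n →
      Submodule.span ℤ {x : K | ∃ w : Word, w.length = n ∧ depth w = d ∧ x = f w}
        = Submodule.span ℤ {x : K | ∃ s : ℕ → ℕ,
            (∀ i, 1 ≤ i → i ≤ d → 1 ≤ s i) ∧ 2 ≤ s d ∧
            (∑ i ∈ Finset.Icc 1 d, s i) = n ∧ x = f (wordW d s)} := by
  intro n d hd _
  refine le_antisymm (Submodule.span_le.mpr ?_) (Submodule.span_le.mpr ?_)
  · rintro _ ⟨w, rfl, rfl, rfl⟩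
    exact coeff_mem_admissibleSpan hf0 hf1 (List.count_pos_iff.mp hd)
  · rintro _ ⟨s, hs, -, hsum, rfl⟩
    exact Submodule.subset_span ⟨wordW d s, by rw [wordW_length hs, hsum], depth_wordW d s, rfl⟩
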